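/- arXiv:2010.05109 — 2 statements merged into one kernel-verified Lean document; each statement's English description precedes it below -/
import Mathlib

section
/- Let (θ_k, r_k) be the global AEGD iterates with effective step sizes η_k := η r_{k+1}/g(θ_k). Suppose f is convex, L-smooth and has a global minimizer θ*. If η_j ≤ 1/L for all j with k₀ ≤ j < k (for some k₀ ≥ 0), then f(θ_k) − f(θ*) ≤ c₁ ‖θ_{k₀} − θ*‖² / (2 (k − k₀) r_k), where c₁ := √(f(θ_{k₀})+c) / η. -/
/-! With `ηₖ` as step sizes, AEGD is plain gradient descent `θ_{j+1} = θ_j - η_j ∇f(θ_j)`.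
For convex `L`-smooth `f`, a step of size `t ≤ 1/L` decreases `f` and satisfies
`t (f(θ_{j+1}) - f(θ*)) ≤ (‖θ_j - θ*‖² - ‖θ_{j+1} - θ*‖²) / 2`, which telescopes over the window.
Since `r` is nonincreasing and `f(θ_j) ≤ f(θ_{k₀})` on the window, every step there is at least
`η r_k / √(f(θ_{k₀}) + c)`, and the rate follows. -/

open Finset
open scoped RealInnerProductSpace

variable {E : Type*} [NormedAddCommGroup E] [InnerProductSpace ℝ E] [CompleteSpace E] {f : E → ℝ}

lemma hasDerivAt_apply_add_smul {x v : E} {t : ℝ} (hf : DifferentiableAt ℝ f (x + t • v)) :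
    HasDerivAt (fun s : ℝ => f (x + s • v)) (⟪gradient f (x + t • v), v⟫) t := by
  have hline : HasDerivAt (fun s : ℝ => x + s • v) v t := by
    simpa using ((hasDerivAt_id t).smul_const v).const_add x
  simpa [Function.comp_def] using hf.hasGradientAt.hasFDerivAt.comp_hasDerivAt t hline

lemma ConvexOn.add_inner_gradient_le (hconv : ConvexOn ℝ Set.univ f) {x : E}
    (hf : DifferentiableAt ℝ f x) (y : E) : f x + ⟪gradient f x, y - x⟫ ≤ f y := by
  have hline : ConvexOn ℝ Set.univ (fun s : ℝ => f (x + s • (y - x))) := by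
    simpa [Function.comp_def, AffineMap.lineMap_apply_module', add_comm] using
      hconv.comp_affineMap (AffineMap.lineMap x y)
  have hd : HasDerivAt (fun s : ℝ => f (x + s • (y - x))) (⟪gradient f x, y - x⟫) 0 := by
    simpa using hasDerivAt_apply_add_smul (t := 0) (v := y - x) (by simpa using hf)
  have := hline.le_slope_of_hasDerivAt (Set.mem_univ 0) (Set.mem_univ 1) zero_lt_one hd
  rw [slope_def_field] at this
  simp only [one_smul, zero_smul, add_zero, add_sub_cancel, sub_zero, div_one] at this
  linarith

section LipschitzGradient

variable {L : ℝ} (hf : Differentiable ℝ f)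
  (hLip : ∀ u v, ‖gradient f u - gradient f v‖ ≤ L * ‖u - v‖)
include hf hLip

lemma le_add_inner_gradient_add_sq (x y : E) :
    f y ≤ f x + ⟪gradient f x, y - x⟫ + L / 2 * ‖y - x‖ ^ 2 := by
  set v := y - x
  let φ : ℝ → ℝ := fun t => f (x + t • v) - t * ⟪gradient f x, v⟫ - L / 2 * ‖v‖ ^ 2 * t ^ 2
  have hφ : ∀ t, HasDerivAt φ (⟪gradient f (x + t • v) - gradient f x, v⟫ - L * ‖v‖ ^ 2 * t) t := by
    intro t
    have h := ((hasDerivAt_apply_add_smul (x := x) (v := v) (hf _)).sub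
      ((hasDerivAt_id' t).mul_const ⟪gradient f x, v⟫)).sub
      ((hasDerivAt_pow 2 t).const_mul (L / 2 * ‖v‖ ^ 2))
    refine h.congr_deriv ?_
    rw [inner_sub_left]
    ring
  have hφ' : ∀ t : ℝ, 0 ≤ t → ⟪gradient f (x + t • v) - gradient f x, v⟫ - L * ‖v‖ ^ 2 * t ≤ 0 := by
    intro t ht
    have hCS := real_inner_le_norm (gradient f (x + t • v) - gradient f x) v
    have hL := hLip (x + t • v) x
    rw [add_sub_cancel_left, norm_smul, Real.norm_of_nonneg ht] at hL
    nlinarith [norm_nonneg v]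
  have hanti : AntitoneOn φ (Set.Icc 0 1) :=
    antitoneOn_of_hasDerivWithinAt_nonpos (convex_Icc 0 1)
      (HasDerivAt.continuousOn fun t _ => hφ t) (fun t _ => (hφ t).hasDerivWithinAt)
      (fun t ht => hφ' t (interior_subset ht).1)
  have := hanti (Set.left_mem_Icc.2 zero_le_one) (Set.right_mem_Icc.2 zero_le_one) zero_le_one
  simp only [φ, v, one_smul, zero_smul, add_zero, add_sub_cancel, one_mul, one_pow, zero_mul,
    sub_zero, ne_eq, OfNat.ofNat_ne_zero, not_false_eq_true, zero_pow, mul_zero] at this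
  linarith

variable {t : ℝ} (ht : 0 ≤ t) (hLt : L * t ≤ 1)
include ht hLt

lemma apply_sub_smul_gradient_le (x : E) :
    f (x - t • gradient f x) ≤ f x - t / 2 * ‖gradient f x‖ ^ 2 := by
  have h := le_add_inner_gradient_add_sq hf hLip x (x - t • gradient f x)
  rw [sub_sub_cancel_left, inner_neg_right, real_inner_smul_right, real_inner_self_eq_norm_sq,
    norm_neg, norm_smul, Real.norm_of_nonneg ht] at h
  nlinarith [mul_nonneg (mul_nonneg (sub_nonneg.2 hLt) ht) (sq_nonneg ‖gradient f x‖)]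

lemma mul_apply_sub_smul_gradient_sub_le (hconv : ConvexOn ℝ Set.univ f) (x z : E) :
    t * (f (x - t • gradient f x) - f z)
      ≤ (‖x - z‖ ^ 2 - ‖x - t • gradient f x - z‖ ^ 2) / 2 := by
  have hdesc := apply_sub_smul_gradient_le hf hLip ht hLt x
  have hsupp := hconv.add_inner_gradient_le (hf x) z
  have hexpand : ‖x - t • gradient f x - z‖ ^ 2
      = ‖x - z‖ ^ 2 - 2 * t * ⟪gradient f x, x - z⟫ + t ^ 2 * ‖gradient f x‖ ^ 2 := by
    rw [sub_right_comm, norm_sub_sq_real, real_inner_smul_right, norm_smul, mul_pow,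
      Real.norm_eq_abs, sq_abs, real_inner_comm]
    ring
  have hflip : ⟪gradient f x, z - x⟫ = -⟪gradient f x, x - z⟫ := by
    rw [← inner_neg_right, neg_sub]
  rw [hexpand]
  rw [hflip] at hsupp
  nlinarith

end LipschitzGradient

section GradientDescent

variable {L : ℝ} (hf : Differentiable ℝ f)
  (hLip : ∀ u v, ‖gradient f u - gradient f v‖ ≤ L * ‖u - v‖)
  {x : ℕ → E} {t : ℕ → ℝ} (hx : ∀ j, x (j + 1) = x j - t j • gradient f (x j))
  {k₀ k : ℕ} (ht : ∀ j ∈ Ico k₀ k, 0 ≤ t j ∧ L * t j ≤ 1)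
include hf hLip hx ht

lemma antitoneOn_comp_of_gradient_steps : AntitoneOn (f ∘ x) (Set.Icc k₀ k) := by
  refine antitoneOn_of_add_one_le Set.ordConnected_Icc fun j _ hj hj1 => ?_
  obtain ⟨htj, hLtj⟩ := ht j (mem_Ico.2 ⟨hj.1, hj1.2⟩)
  have := apply_sub_smul_gradient_le hf hLip htj hLtj (x j)
  rw [Function.comp_apply, Function.comp_apply, hx]
  nlinarith [sq_nonneg ‖gradient f (x j)‖]

lemma gradient_steps_mul_sub_le (hconv : ConvexOn ℝ Set.univ f) (hk : k₀ ≤ k)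
    {τ : ℝ} (hτ : ∀ j ∈ Ico k₀ k, τ ≤ t j) {z : E} (hz : f z ≤ f (x k)) :
    ((k : ℝ) - k₀) * τ * (f (x k) - f z) ≤ ‖x k₀ - z‖ ^ 2 / 2 := by
  have hstep : ∀ j ∈ Ico k₀ k,
      τ * (f (x k) - f z) ≤ (‖x j - z‖ ^ 2 - ‖x (j + 1) - z‖ ^ 2) / 2 := by
    intro j hj
    obtain ⟨htj, hLtj⟩ := ht j hj
    have hmono : f (x k) ≤ f (x (j + 1)) :=
      antitoneOn_comp_of_gradient_steps hf hLip hx ht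
        ⟨(mem_Ico.1 hj).1.trans j.le_succ, (mem_Ico.1 hj).2⟩ ⟨hk, le_rfl⟩ (mem_Ico.1 hj).2
    calc τ * (f (x k) - f z) ≤ t j * (f (x (j + 1)) - f z) :=
          mul_le_mul (hτ j hj) (by linarith) (sub_nonneg.2 hz) htj
      _ ≤ _ := hx j ▸ mul_apply_sub_smul_gradient_sub_le hf hLip htj hLtj hconv (x j) z
  have htelescope : ∑ j ∈ Ico k₀ k, (‖x j - z‖ ^ 2 - ‖x (j + 1) - z‖ ^ 2) / 2
      = (‖x k₀ - z‖ ^ 2 - ‖x k - z‖ ^ 2) / 2 := by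
    rw [← sum_div, ← neg_sub (‖x k - z‖ ^ 2), ← sum_Ico_sub (fun j => ‖x j - z‖ ^ 2) hk,
      ← sum_neg_distrib]
    simp only [neg_sub]
  calc ((k : ℝ) - k₀) * τ * (f (x k) - f z) = ∑ j ∈ Ico k₀ k, τ * (f (x k) - f z) := by
        rw [sum_const, Nat.card_Ico, nsmul_eq_mul, Nat.cast_sub hk, mul_assoc]
    _ ≤ (‖x k₀ - z‖ ^ 2 - ‖x k - z‖ ^ 2) / 2 := htelescope ▸ sum_le_sum hstep
    _ ≤ ‖x k₀ - z‖ ^ 2 / 2 := by linarith [sq_nonneg ‖x k - z‖]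

end GradientDescent

lemma gradient_sqrt_add_const {x : E} (hf : DifferentiableAt ℝ f x) {c : ℝ} (hx : f x + c ≠ 0) :
    gradient (fun y => √(f y + c)) x = (2 * √(f x + c))⁻¹ • gradient f x := by
  have h : HasFDerivAt (fun y => √(f y + c)) ((1 / (2 * √(f x + c))) • fderiv ℝ f x) x :=
    (Real.hasDerivAt_sqrt hx).comp_hasFDerivAt x (hf.hasFDerivAt.add_const c)
  rw [gradient, gradient, h.fderiv, one_div, map_smul]

section EnergyRecursion

variable {r a : ℕ → ℝ} (ha : ∀ k, 0 ≤ a k) (hr : ∀ k, r (k + 1) = r k / (1 + a k))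
include ha hr

lemma pos_of_succ_eq_div_one_add (h0 : 0 < r 0) (k : ℕ) : 0 < r k := by
  induction k with
  | zero => exact h0
  | succ k ih => rw [hr]; exact div_pos ih (by linarith [ha k])

lemma antitone_of_succ_eq_div_one_add (h0 : 0 < r 0) : Antitone r :=
  antitone_nat_of_succ_le fun k => by
    rw [hr]
    exact div_le_self (pos_of_succ_eq_div_one_add ha hr h0 k).le (by linarith [ha k])

end EnergyRecursion

theorem aegd_convex_rate_general {n : ℕ} (f : EuclideanSpace ℝ (Fin n) → ℝ)
    (hf : Differentiable ℝ f)
    (hconv : ConvexOn ℝ Set.univ f)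
    (c : ℝ) (hfc : ∀ x, 0 < f x + c)
    (g : EuclideanSpace ℝ (Fin n) → ℝ) (hg : g = fun x => Real.sqrt (f x + c))
    (L : ℝ) (hL : 0 < L)
    (hLip : ∀ u v, ‖gradient f u - gradient f v‖ ≤ L * ‖u - v‖)
    (θstar : EuclideanSpace ℝ (Fin n)) (hmin : ∀ x, f θstar ≤ f x)
    (η : ℝ) (hη : 0 < η)
    (θ : ℕ → EuclideanSpace ℝ (Fin n)) (r : ℕ → ℝ)
    (hr0 : r 0 = g (θ 0))
    (hr : ∀ k, r (k + 1) = r k / (1 + 2 * η * ‖gradient g (θ k)‖ ^ 2))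
    (hθ : ∀ k, θ (k + 1) = θ k - (2 * η * r (k + 1)) • gradient g (θ k))
    (ηk : ℕ → ℝ) (hηk : ∀ k, ηk k = η * r (k + 1) / g (θ k))
    (k₀ k : ℕ) (hk : k₀ < k)
    (hstep : ∀ j, k₀ ≤ j → j < k → ηk j ≤ 1 / L) :
    f (θ k) - f θstar
      ≤ (Real.sqrt (f (θ k₀) + c) / η) * ‖θ k₀ - θstar‖ ^ 2
          / (2 * ((k : ℝ) - (k₀ : ℝ)) * r k) := by
  subst hg
  have hg_pos : ∀ x, 0 < √(f x + c) := fun x => Real.sqrt_pos.2 (hfc x)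
  have hr_pos := pos_of_succ_eq_div_one_add (fun _ => by positivity) hr (hr0 ▸ hg_pos _)
  have hr_anti := antitone_of_succ_eq_div_one_add (fun _ => by positivity) hr (hr0 ▸ hg_pos _)
  have hθ_gd : ∀ j, θ (j + 1) = θ j - ηk j • gradient f (θ j) := fun j => by
    rw [hθ, gradient_sqrt_add_const (hf _) (hfc _).ne', smul_smul, hηk]
    field_simp [(hg_pos (θ j)).ne']
  have hηk_step : ∀ j ∈ Ico k₀ k, 0 ≤ ηk j ∧ L * ηk j ≤ 1 := fun j hj =>
    ⟨hηk j ▸ by have := hr_pos (j + 1); have := hg_pos (θ j); positivity,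
      (le_div_iff₀' hL).1 ((mem_Ico.1 hj).elim (hstep j))⟩
  have hτ : ∀ j ∈ Ico k₀ k, η * r k / √(f (θ k₀) + c) ≤ ηk j := fun j hj => by
    obtain ⟨hk₀j, hjk⟩ := mem_Ico.1 hj
    have hfj : f (θ j) ≤ f (θ k₀) :=
      antitoneOn_comp_of_gradient_steps hf hLip hθ_gd hηk_step ⟨le_rfl, hk.le⟩ ⟨hk₀j, hjk.le⟩ hk₀j
    have := hr_pos (j + 1)
    have := hg_pos (θ j)
    rw [hηk]
    dsimp only
    gcongr
    exact hr_anti hjk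
  have hrate := gradient_steps_mul_sub_le hf hLip hθ_gd hηk_step hconv hk.le hτ
    (hmin (θ k))
  have hwindow : (0 : ℝ) < k - k₀ := sub_pos.2 (Nat.cast_lt.2 hk)
  have hG := hg_pos (θ k₀)
  rw [le_div_iff₀ (by have := hr_pos k; positivity)]
  calc (f (θ k) - f θstar) * (2 * (k - k₀) * r k)
      = 2 * √(f (θ k₀) + c) / η
        * ((k - k₀) * (η * r k / √(f (θ k₀) + c)) * (f (θ k) - f θstar)) := by
        field_simp
    _ ≤ 2 * √(f (θ k₀) + c) / η * (‖θ k₀ - θstar‖ ^ 2 / 2) := by gcongr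
    _ = √(f (θ k₀) + c) / η * ‖θ k₀ - θstar‖ ^ 2 := by ring

/-- For the global AEGD iterates, if `f` is convex, `L`-smooth with
global minimizer `θ*`, and `η_j ≤ 1/L` for all `k₀ ≤ j < k`, then
`f(θ_k) − f(θ*) ≤ c₁ ‖θ_{k₀} − θ*‖² / (2 (k − k₀) r_k)` with
`c₁ := √(f(θ_{k₀})+c)/η`. -/
theorem aegd_convex_rate {n : ℕ} (f : EuclideanSpace ℝ (Fin n) → ℝ)
    (hf : Differentiable ℝ f) (hbdd : ∃ B : ℝ, ∀ x, B ≤ f x)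
    (hconv : ConvexOn ℝ Set.univ f)
    (c : ℝ) (hc : 0 < c) (hfc : ∀ x, 0 < f x + c)
    (g : EuclideanSpace ℝ (Fin n) → ℝ) (hg : g = fun x => Real.sqrt (f x + c))
    (L : ℝ) (hL : 0 < L)
    (hLip : ∀ u v, ‖gradient f u - gradient f v‖ ≤ L * ‖u - v‖)
    (θstar : EuclideanSpace ℝ (Fin n)) (hmin : ∀ x, f θstar ≤ f x)
    (η : ℝ) (hη : 0 < η)
    (θ : ℕ → EuclideanSpace ℝ (Fin n)) (r : ℕ → ℝ)
    (hr0 : r 0 = g (θ 0))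
    (hr : ∀ k, r (k + 1) = r k / (1 + 2 * η * ‖gradient g (θ k)‖ ^ 2))
    (hθ : ∀ k, θ (k + 1) = θ k - (2 * η * r (k + 1)) • gradient g (θ k))
    (ηk : ℕ → ℝ) (hηk : ∀ k, ηk k = η * r (k + 1) / g (θ k))
    (k₀ k : ℕ) (hk : k₀ < k)
    (hstep : ∀ j, k₀ ≤ j → j < k → ηk j ≤ 1 / L) :
    f (θ k) - f θstar
      ≤ (Real.sqrt (f (θ k₀) + c) / η) * ‖θ k₀ - θstar‖ ^ 2
          / (2 * ((k : ℝ) - (k₀ : ℝ)) * r k) :=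
  aegd_convex_rate_general f hf hconv c hfc g hg L hL hLip θstar hmin η hη θ r hr0 hr hθ ηk hηk k₀ k
    hk hstep
end

section
/- Let (θ_k, r_{k,i}) be the element-wise AEGD iterates with effective step sizes η_{ij} := η r_{j+1,i}/g(θ_j). Suppose f is L-smooth, has a minimizer θ* with minimum value f(θ*), and satisfies the Polyak–Łojasiewicz inequality with constant μ > 0. If η_{ij} ≤ 1/L for all i ∈ {1,…,n} and all j with k₀ ≤ j ≤ k (for some k₀ ≥ 0), then f(θ_k) − f(θ*) ≤ exp(−c₀ (k − k₀) min_i r_{k,i}) · (f(θ_{k₀}) − f(θ*)), where c₀ := μη/√(f(θ_{k₀})+c). -/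
open scoped InnerProductSpace

/-!
Since `g = √(f + c)` gives `∂ᵢg = ∂ᵢf / (2g)`, the element-wise AEGD step is gradient descent
with per-coordinate step sizes `ηᵢⱼ`. While these are at most `1/L`, the descent lemma of an
`L`-smooth function makes each step decrease `f` by at least `∑ᵢ ηᵢⱼ (∂ᵢf)² / 2`; in particular
`f`, and hence `g`, decreases along the iterates. As the energies `rⱼᵢ` decrease too, every
`ηᵢⱼ` with `j < k` is at least `b := η minᵢ rₖᵢ / g(θ_{k₀})`, so the PL inequality turns each
step into the contraction `f(θⱼ₊₁) - f* ≤ (1 - μb)(f(θⱼ) - f*)`, and `1 - μb ≤ exp(-μb)`.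
-/

theorem le_exp_mul_of_succ_le_one_sub_mul {u : ℕ → ℝ} {q : ℝ} {k₀ k : ℕ} (hk : k₀ ≤ k)
    (hu : ∀ j, k₀ ≤ j → j < k → 0 ≤ u j ∧ u (j + 1) ≤ (1 - q) * u j) :
    u k ≤ Real.exp (-q * (k - k₀)) * u k₀ := by
  induction k, hk using Nat.le_induction with
  | base => simp
  | succ k hk ih =>
    obtain ⟨hu₀, hsucc⟩ := hu k hk (Nat.lt_succ_self k)
    calc u (k + 1) ≤ (1 - q) * u k := hsucc
      _ ≤ Real.exp (-q) * u k := by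
        gcongr
        linarith [Real.add_one_le_exp (-q)]
      _ ≤ Real.exp (-q) * (Real.exp (-q * (k - k₀)) * u k₀) := by
        gcongr
        exact ih fun j hj hjk => hu j hj (by omega)
      _ = Real.exp (-q * ((k + 1 : ℕ) - k₀)) * u k₀ := by
        rw [← mul_assoc, ← Real.exp_add]
        push_cast
        congr 2
        ring

section Smooth

variable {E : Type*} [NormedAddCommGroup E] [InnerProductSpace ℝ E] [CompleteSpace E]

theorem HasGradientAt.sqrt_add_const {f : E → ℝ} {f' x : E} (c : ℝ) (hf : HasGradientAt f f' x)
    (hx : 0 < f x + c) :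
    HasGradientAt (fun y => √(f y + c)) ((2 * √(f x + c))⁻¹ • f') x := by
  have h := (Real.hasDerivAt_sqrt hx.ne').comp_hasFDerivAt x (hf.hasFDerivAt.add_const c)
  rw [hasGradientAt_iff_hasFDerivAt, map_smul]
  simpa [one_div, Function.comp_def] using h

theorem le_add_inner_gradient_add_half_mul_sq_norm {f : E → ℝ} {L : ℝ} (hf : Differentiable ℝ f)
    (hLip : ∀ u v, ‖gradient f u - gradient f v‖ ≤ L * ‖u - v‖) (x y : E) :
    f y ≤ f x + ⟪gradient f x, y - x⟫_ℝ + L / 2 * ‖y - x‖ ^ 2 := by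
  set d := y - x with hd
  let ψ : ℝ → ℝ := fun t => f (x + t • d) - t * ⟪gradient f x, d⟫_ℝ - L / 2 * t ^ 2 * ‖d‖ ^ 2
  have hψ : ∀ t, HasDerivAt ψ
      (⟪gradient f (x + t • d) - gradient f x, d⟫_ℝ - L * t * ‖d‖ ^ 2) t := by
    intro t
    have hline : HasDerivAt (fun t : ℝ => x + t • d) d t := by
      simpa using ((hasDerivAt_id t).smul_const d).const_add x
    have h1 := (hf _).hasGradientAt.hasFDerivAt.comp_hasDerivAt t hline
    have h2 := ((hasDerivAt_pow 2 t).const_mul (L / 2)).mul_const (‖d‖ ^ 2)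
    refine ((h1.sub ((hasDerivAt_id t).mul_const ⟪gradient f x, d⟫_ℝ)).sub h2).congr_deriv ?_
    rw [InnerProductSpace.toDual_apply_apply, inner_sub_left]
    ring
  have hψ' : ∀ t ∈ interior (Set.Icc (0 : ℝ) 1), deriv ψ t ≤ 0 := by
    intro t ht
    rw [interior_Icc] at ht
    rw [(hψ t).deriv, sub_nonpos]
    calc ⟪gradient f (x + t • d) - gradient f x, d⟫_ℝ
        ≤ ‖gradient f (x + t • d) - gradient f x‖ * ‖d‖ := real_inner_le_norm _ _
      _ ≤ L * ‖t • d‖ * ‖d‖ :=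
        mul_le_mul_of_nonneg_right (by simpa using hLip (x + t • d) x) (norm_nonneg d)
      _ = L * t * ‖d‖ ^ 2 := by rw [norm_smul, Real.norm_of_nonneg ht.1.le]; ring
  have hdiff : Differentiable ℝ ψ := fun t => (hψ t).differentiableAt
  have h01 := antitoneOn_of_deriv_nonpos (convex_Icc 0 1) hdiff.continuous.continuousOn
    hdiff.differentiableOn hψ' (Set.left_mem_Icc.2 zero_le_one) (Set.right_mem_Icc.2 zero_le_one)
    zero_le_one
  simp only [ψ, hd, one_smul, zero_smul, add_zero, add_sub_cancel] at h01
  linarith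

end Smooth

section CoordinateDescent

variable {ι : Type*} [Fintype ι] {f : EuclideanSpace ℝ ι → ℝ} {L μ : ℝ}

theorem le_sub_sum_of_coordinate_step (hf : Differentiable ℝ f) (hL : 0 < L)
    (hLip : ∀ u v, ‖gradient f u - gradient f v‖ ≤ L * ‖u - v‖) {x y : EuclideanSpace ℝ ι}
    {s : ι → ℝ} (hs₀ : ∀ i, 0 ≤ s i) (hsL : ∀ i, s i ≤ 1 / L)
    (hy : ∀ i, y i = x i - s i * gradient f x i) :
    f y ≤ f x - ∑ i, s i / 2 * gradient f x i ^ 2 := by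
  have hinner : ⟪gradient f x, y - x⟫_ℝ = ∑ i, -(s i * gradient f x i ^ 2) := by
    simp only [PiLp.inner_apply, PiLp.sub_apply, hy, RCLike.inner_apply, conj_trivial]
    exact Finset.sum_congr rfl fun i _ => by ring
  have hnorm : ‖y - x‖ ^ 2 = ∑ i, (s i * gradient f x i) ^ 2 := by
    simp only [EuclideanSpace.norm_sq_eq, PiLp.sub_apply, hy, Real.norm_eq_abs, sq_abs]
    exact Finset.sum_congr rfl fun i _ => by ring
  have hterm : ∀ i, -(s i * gradient f x i ^ 2) + L / 2 * (s i * gradient f x i) ^ 2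
      ≤ -(s i / 2 * gradient f x i ^ 2) := by
    intro i
    have hLs : L * s i ≤ 1 := by rw [← le_div_iff₀' hL]; exact hsL i
    nlinarith [mul_nonneg (hs₀ i) (sq_nonneg (gradient f x i))]
  have hsum := Finset.sum_le_sum fun i (_ : i ∈ Finset.univ) => hterm i
  rw [Finset.sum_add_distrib, ← Finset.mul_sum] at hsum
  have := le_add_inner_gradient_add_half_mul_sq_norm hf hLip x y
  rw [hinner, hnorm] at this
  simp only [Finset.sum_neg_distrib] at this hsum
  linarith

theorem sub_le_one_sub_mul_of_coordinate_step (hf : Differentiable ℝ f) (hL : 0 < L)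
    (hLip : ∀ u v, ‖gradient f u - gradient f v‖ ≤ L * ‖u - v‖) {xstar : EuclideanSpace ℝ ι}
    (hPL : ∀ x, μ * (f x - f xstar) ≤ 1 / 2 * ‖gradient f x‖ ^ 2) {x y : EuclideanSpace ℝ ι}
    {s : ι → ℝ} {b : ℝ} (hb : 0 ≤ b) (hbs : ∀ i, b ≤ s i) (hsL : ∀ i, s i ≤ 1 / L)
    (hy : ∀ i, y i = x i - s i * gradient f x i) :
    f y - f xstar ≤ (1 - μ * b) * (f x - f xstar) := by
  have hstep := le_sub_sum_of_coordinate_step hf hL hLip (fun i => hb.trans (hbs i)) hsL hy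
  have hgrad : b / 2 * ‖gradient f x‖ ^ 2 ≤ ∑ i, s i / 2 * gradient f x i ^ 2 := by
    simp only [EuclideanSpace.norm_sq_eq, Real.norm_eq_abs, sq_abs, Finset.mul_sum]
    gcongr with i
    exact hbs i
  nlinarith [mul_le_mul_of_nonneg_left (hPL x) hb]

theorem pl_rate_of_coordinate_steps (hf : Differentiable ℝ f) (hL : 0 < L)
    (hLip : ∀ u v, ‖gradient f u - gradient f v‖ ≤ L * ‖u - v‖) {xstar : EuclideanSpace ℝ ι}
    (hmin : ∀ x, f xstar ≤ f x) (hPL : ∀ x, μ * (f x - f xstar) ≤ 1 / 2 * ‖gradient f x‖ ^ 2)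
    {θ : ℕ → EuclideanSpace ℝ ι} {s : ℕ → ι → ℝ} {b : ℝ} (hb : 0 ≤ b) {k₀ k : ℕ} (hk : k₀ ≤ k)
    (hθ : ∀ j i, θ (j + 1) i = θ j i - s j i * gradient f (θ j) i)
    (hs : ∀ j, k₀ ≤ j → j < k → ∀ i, b ≤ s j i ∧ s j i ≤ 1 / L) :
    f (θ k) - f xstar ≤ Real.exp (-(μ * b) * (k - k₀)) * (f (θ k₀) - f xstar) :=
  le_exp_mul_of_succ_le_one_sub_mul hk fun j hj hjk =>
    ⟨sub_nonneg.2 (hmin _), sub_le_one_sub_mul_of_coordinate_step hf hL hLip hPL hb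
      (fun i => (hs j hj hjk i).1) (fun i => (hs j hj hjk i).2) (hθ j)⟩

end CoordinateDescent

theorem aegd_energy_pos {r v : ℕ → ℝ} {η : ℝ} (hη : 0 ≤ η) (h0 : 0 < r 0)
    (hr : ∀ k, r (k + 1) = r k / (1 + 2 * η * v k ^ 2)) (k : ℕ) : 0 < r k := by
  induction k with
  | zero => exact h0
  | succ k ih => rw [hr]; positivity

theorem aegd_energy_antitone {r v : ℕ → ℝ} {η : ℝ} (hη : 0 ≤ η) (h0 : 0 < r 0)
    (hr : ∀ k, r (k + 1) = r k / (1 + 2 * η * v k ^ 2)) : Antitone r :=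
  antitone_nat_of_succ_le fun k => by
    rw [hr]
    exact div_le_self (aegd_energy_pos hη h0 hr k).le (by nlinarith [sq_nonneg (v k)])

theorem aegd_elementwise_pl_rate_general {n : ℕ} (hn : 0 < n)
    (f : EuclideanSpace ℝ (Fin n) → ℝ)
    (hf : Differentiable ℝ f)
    (c : ℝ) (hfc : ∀ x, 0 < f x + c)
    (g : EuclideanSpace ℝ (Fin n) → ℝ) (hg : g = fun x => Real.sqrt (f x + c))
    (L : ℝ) (hL : 0 < L)
    (hLip : ∀ u v, ‖gradient f u - gradient f v‖ ≤ L * ‖u - v‖)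
    (θstar : EuclideanSpace ℝ (Fin n)) (hmin : ∀ x, f θstar ≤ f x)
    (μ : ℝ)
    (hPL : ∀ x, μ * (f x - f θstar) ≤ 1 / 2 * ‖gradient f x‖ ^ 2)
    (η : ℝ) (hη : 0 < η)
    (θ : ℕ → EuclideanSpace ℝ (Fin n)) (r : ℕ → Fin n → ℝ)
    (hr0 : ∀ i, r 0 i = g (θ 0))
    (hr : ∀ k i, r (k + 1) i = r k i / (1 + 2 * η * (gradient g (θ k) i) ^ 2))
    (hθ : ∀ k i, θ (k + 1) i = θ k i - 2 * η * r (k + 1) i * gradient g (θ k) i)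
    (ηe : Fin n → ℕ → ℝ) (hηe : ∀ i j, ηe i j = η * r (j + 1) i / g (θ j))
    (k₀ k : ℕ) (hk : k₀ ≤ k)
    (hstep : ∀ i, ∀ j, k₀ ≤ j → j ≤ k → ηe i j ≤ 1 / L) :
    f (θ k) - f θstar
      ≤ Real.exp (-(μ * η / Real.sqrt (f (θ k₀) + c)) * ((k : ℝ) - (k₀ : ℝ))
            * Finset.univ.inf' (Finset.univ_nonempty_iff.mpr ⟨⟨0, hn⟩⟩)
                (fun i => r k i))
        * (f (θ k₀) - f θstar) := by
  have hgpos : ∀ x, 0 < g x := fun x => hg ▸ Real.sqrt_pos.2 (hfc x)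
  have hr0pos : ∀ i, 0 < r 0 i := fun i => hr0 i ▸ hgpos _
  have hrpos : ∀ j i, 0 < r j i := fun j i =>
    aegd_energy_pos (r := (r · i)) hη.le (hr0pos i) (fun k => hr k i) j
  have hranti : ∀ i, Antitone (r · i) := fun i =>
    aegd_energy_antitone hη.le (hr0pos i) (fun k => hr k i)
  have hupdate : ∀ j i, θ (j + 1) i = θ j i - ηe i j * gradient f (θ j) i := by
    intro j i
    have hgrad : gradient g (θ j) = (2 * g (θ j))⁻¹ • gradient f (θ j) := by
      subst hg
      exact ((hf _).hasGradientAt.sqrt_add_const c (hfc _)).gradient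
    rw [hθ, hgrad, hηe, PiLp.smul_apply, smul_eq_mul]
    field_simp [(hgpos (θ j)).ne']
  have hηe_nonneg : ∀ i j, 0 ≤ ηe i j := fun i j => by
    rw [hηe]; exact (div_pos (mul_pos hη (hrpos _ i)) (hgpos _)).le
  -- With `b = 0` the rate estimate says that `f` decreases along the iterates.
  have hg_le : ∀ j, k₀ ≤ j → j ≤ k → g (θ j) ≤ g (θ k₀) := by
    intro j hj hjk
    have := pl_rate_of_coordinate_steps hf hL hLip hmin hPL le_rfl hj hupdate
      fun j' _ hj' i => ⟨hηe_nonneg i j', hstep i j' (by omega) (by omega)⟩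
    rw [hg]
    exact Real.sqrt_le_sqrt (by simpa using this)
  set m := Finset.univ.inf' (Finset.univ_nonempty_iff.mpr ⟨⟨0, hn⟩⟩) fun i => r k i
  have hm : 0 ≤ m := Finset.le_inf' _ _ fun i _ => (hrpos k i).le
  have hlow : ∀ j, k₀ ≤ j → j < k → ∀ i, η * m / g (θ k₀) ≤ ηe i j := by
    intro j hj hjk i
    rw [hηe]
    refine div_le_div₀ ((mul_pos hη (hrpos (j + 1) i)).le) ?_ (hgpos _) (hg_le j hj hjk.le)
    exact mul_le_mul_of_nonneg_left ((Finset.inf'_le _ (Finset.mem_univ i)).trans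
      (hranti i hjk)) hη.le
  have := pl_rate_of_coordinate_steps hf hL hLip hmin hPL (div_nonneg (mul_nonneg hη.le hm) (hgpos _).le) hk hupdate
    fun j hj hjk i => ⟨hlow j hj hjk i, hstep i j hj hjk.le⟩
  convert this using 3
  rw [hg]
  ring

/-- For the element-wise AEGD iterates, if `f` is `L`-smooth, has
minimizer `θ*`, satisfies the PL inequality with constant `μ > 0`, and the effective
step sizes satisfy `η_{ij} ≤ 1/L` for all `i` and all `k₀ ≤ j ≤ k`, then
`f(θ_k) − f(θ*) ≤ exp(−c₀ (k − k₀) min_i r_{k,i}) (f(θ_{k₀}) − f(θ*))` with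
`c₀ := μη/√(f(θ_{k₀})+c)`. -/
theorem aegd_elementwise_pl_rate {n : ℕ} (hn : 0 < n)
    (f : EuclideanSpace ℝ (Fin n) → ℝ)
    (hf : Differentiable ℝ f) (hbdd : ∃ B : ℝ, ∀ x, B ≤ f x)
    (c : ℝ) (hc : 0 < c) (hfc : ∀ x, 0 < f x + c)
    (g : EuclideanSpace ℝ (Fin n) → ℝ) (hg : g = fun x => Real.sqrt (f x + c))
    (L : ℝ) (hL : 0 < L)
    (hLip : ∀ u v, ‖gradient f u - gradient f v‖ ≤ L * ‖u - v‖)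
    (θstar : EuclideanSpace ℝ (Fin n)) (hmin : ∀ x, f θstar ≤ f x)
    (μ : ℝ) (hμ : 0 < μ)
    (hPL : ∀ x, μ * (f x - f θstar) ≤ 1 / 2 * ‖gradient f x‖ ^ 2)
    (η : ℝ) (hη : 0 < η)
    (θ : ℕ → EuclideanSpace ℝ (Fin n)) (r : ℕ → Fin n → ℝ)
    (hr0 : ∀ i, r 0 i = g (θ 0))
    (hr : ∀ k i, r (k + 1) i = r k i / (1 + 2 * η * (gradient g (θ k) i) ^ 2))
    (hθ : ∀ k i, θ (k + 1) i = θ k i - 2 * η * r (k + 1) i * gradient g (θ k) i)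
    (ηe : Fin n → ℕ → ℝ) (hηe : ∀ i j, ηe i j = η * r (j + 1) i / g (θ j))
    (k₀ k : ℕ) (hk : k₀ ≤ k)
    (hstep : ∀ i, ∀ j, k₀ ≤ j → j ≤ k → ηe i j ≤ 1 / L) :
    f (θ k) - f θstar
      ≤ Real.exp (-(μ * η / Real.sqrt (f (θ k₀) + c)) * ((k : ℝ) - (k₀ : ℝ))
            * Finset.univ.inf' (Finset.univ_nonempty_iff.mpr ⟨⟨0, hn⟩⟩)
                (fun i => r k i))
        * (f (θ k₀) - f θstar) :=
  aegd_elementwise_pl_rate_general hn f hf c hfc g hg L hL hLip θstar hmin μ hPL η hη θ r hr0 hr hθ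
    ηe hηe k₀ k hk hstep
end
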